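/- arXiv:2008.06022 — 2 statements merged into one kernel-verified Lean document; each statement's English description precedes it below -/
import Mathlib

section
/- Let k ≥ 1 be an integer, λ > 0, b₁ ≥ 0 and b₂ > 0. Let Y₁, Y₂ be independent ℕ-valued random variables on a probability space with P(Y₁ = j) = e^{-kλb₁} c_k(j, λb₁) and P(Y₂ = j) = e^{-kλb₂} c_k(j, λb₂) for all j. Then for all integers 0 ≤ m ≤ n, the conditional probability P(Y₂ = m | Y₁ + Y₂ = n) = [c_k(n−m, λb₁) · c_k(m, λb₂)] / c_k(n, λ(b₁+b₂)). (This is the conditional distribution of the homogeneous Poisson field of order k on a subset A₂ ⊆ A₁ given its value on A₁, with b₂ = m_d(A₂) and b₁ = m_d(A₁) − m_d(A₂).) -/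
open scoped BigOperators

/-- `Omega k n` is the (finite) set of tuples `(x₁,…,x_k)` of non-negative integers with
`x₁ + 2·x₂ + ⋯ + k·x_k = n`. -/
def Omega (k n : ℕ) : Finset (Fin k → ℕ) :=
  (Fintype.piFinset fun _ => Finset.range (n + 1)).filter
    (fun x => ∑ i, (i.1 + 1) * x i = n)

/-- `ζ(x) = x₁ + ⋯ + x_k`. -/
def zeta {k : ℕ} (x : Fin k → ℕ) : ℕ := ∑ i, x i

/-- `Π!(x) = x₁! ⋯ x_k!`. -/
def pifact {k : ℕ} (x : Fin k → ℕ) : ℕ := ∏ i, (x i).factorial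

/-- `c_k(n, y) = ∑_{x ∈ Ω(k,n)} y^{ζ(x)} / Π!(x)`. -/
noncomputable def ck (k n : ℕ) (y : ℝ) : ℝ :=
  ∑ x ∈ Omega k n, y ^ zeta x / (pifact x : ℝ)

/-! The generating function of `n ↦ c_k(n, y)` is `exp (y (t + t² + ⋯ + tᵏ))`, so
`c_k(·, a + b)` is the convolution of `c_k(·, a)` and `c_k(·, b)`. Combinatorially: split every
coordinate of `x ∈ Ω(k, n)` as `xᵢ = uᵢ + vᵢ` and expand `(a + b)^{xᵢ} / xᵢ!` by the binomial
theorem. By independence the law of `Y₁ + Y₂` is the convolution of the laws of `Y₁` and `Y₂`,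
hence the order-`k` Poisson law with parameter `λ (b₁ + b₂)`; dividing
`P(Y₁ = n - m) P(Y₂ = m)` by it, the exponential factors cancel. -/

open Finset

theorem add_pow_div_factorial {K : Type*} [Field K] [CharZero K] (a b : K) (c : ℕ) :
    (a + b) ^ c / c.factorial =
      ∑ p ∈ antidiagonal c, a ^ p.1 / p.1.factorial * (b ^ p.2 / p.2.factorial) := by
  have := congrArg (PowerSeries.coeff c) (PowerSeries.exp_mul_exp_eq_exp_add a b)
  simpa [PowerSeries.coeff_mul, PowerSeries.coeff_rescale, div_eq_mul_inv, mul_mul_mul_comm]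
    using this.symm

section Weight

variable {k : ℕ}

def weight (x : Fin k → ℕ) : ℕ := ∑ i, (i.1 + 1) * x i

theorem weight_add (u v : Fin k → ℕ) : weight (u + v) = weight u + weight v := by
  simp only [weight, Pi.add_apply, mul_add, sum_add_distrib]

theorem weight_single (i : Fin k) (c : ℕ) : weight (Pi.single i c) = (i.1 + 1) * c := by
  simp [weight, Pi.single_apply]

theorem le_weight (x : Fin k → ℕ) (i : Fin k) : x i ≤ weight x :=
  (Nat.le_mul_of_pos_left _ i.1.succ_pos).trans
    (single_le_sum (f := fun i : Fin k => (i.1 + 1) * x i) (fun _ _ => Nat.zero_le _) (mem_univ i))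

theorem mem_Omega {n : ℕ} {x : Fin k → ℕ} : x ∈ Omega k n ↔ weight x = n := by
  simp only [Omega, mem_filter, Fintype.mem_piFinset, mem_range]
  exact and_iff_right_of_imp fun h i => Nat.lt_succ_of_le (h ▸ le_weight x i)

end Weight

theorem sum_antidiagonal_sum_Omega_sum_Omega {M : Type*} [AddCommMonoid M] (k n : ℕ)
    (F : (Fin k → ℕ) → (Fin k → ℕ) → M) :
    ∑ ij ∈ antidiagonal n, ∑ u ∈ Omega k ij.1, ∑ v ∈ Omega k ij.2, F u v =
      ∑ x ∈ Omega k n, ∑ p ∈ Fintype.piFinset fun i => antidiagonal (x i),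
        F (fun i => (p i).1) (fun i => (p i).2) := by
  simp_rw [← sum_product', sum_sigma']
  refine sum_nbij' (fun q => ⟨q.2.1 + q.2.2, fun i => (q.2.1 i, q.2.2 i)⟩)
    (fun q => ⟨(weight fun i => (q.2 i).1, weight fun i => (q.2 i).2),
      (fun i => (q.2 i).1, fun i => (q.2 i).2)⟩) ?_ ?_ ?_ ?_ fun _ _ => rfl
  · rintro ⟨⟨i, j⟩, u, v⟩
    simp only [mem_sigma, mem_product, HasAntidiagonal.mem_antidiagonal, mem_Omega,
      Fintype.mem_piFinset]
    rintro ⟨rfl, rfl, rfl⟩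
    exact ⟨weight_add u v, fun _ => rfl⟩
  · rintro ⟨x, p⟩
    simp only [mem_sigma, mem_product, HasAntidiagonal.mem_antidiagonal, mem_Omega,
      Fintype.mem_piFinset]
    rintro ⟨rfl, hp⟩
    refine ⟨?_, trivial, trivial⟩
    rw [← weight_add]
    exact congrArg weight (funext hp)
  · rintro ⟨⟨i, j⟩, u, v⟩
    simp only [mem_sigma, mem_product, HasAntidiagonal.mem_antidiagonal, mem_Omega]
    rintro ⟨-, rfl, rfl⟩
    rfl
  · rintro ⟨x, p⟩
    simp only [mem_sigma, HasAntidiagonal.mem_antidiagonal, Fintype.mem_piFinset]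
    rintro ⟨-, hp⟩
    exact Sigma.ext (funext hp) HEq.rfl

theorem pow_zeta_div_pifact {K : Type*} [Field K] {k : ℕ} (y : K) (x : Fin k → ℕ) :
    y ^ zeta x / pifact x = ∏ i, y ^ x i / (x i).factorial := by
  rw [zeta, pifact, prod_div_distrib, prod_pow_eq_pow_sum, Nat.cast_prod]

theorem ck_add (k n : ℕ) (a b : ℝ) :
    ck k n (a + b) = ∑ ij ∈ antidiagonal n, ck k ij.1 a * ck k ij.2 b := by
  simp_rw [ck, sum_mul_sum, sum_antidiagonal_sum_Omega_sum_Omega, pow_zeta_div_pifact,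
    add_pow_div_factorial, prod_univ_sum, prod_mul_distrib]

theorem ck_nonneg (k n : ℕ) {y : ℝ} (hy : 0 ≤ y) : 0 ≤ ck k n y :=
  sum_nonneg fun _ _ => by positivity

theorem ck_pos {k : ℕ} (hk : 0 < k) (n : ℕ) {y : ℝ} (hy : 0 < y) : 0 < ck k n y := by
  have hx : Pi.single (⟨0, hk⟩ : Fin k) n ∈ Omega k n := by
    rw [mem_Omega, weight_single, zero_add, one_mul]
  have hpifact : 0 < pifact (Pi.single (⟨0, hk⟩ : Fin k) n) :=
    prod_pos fun _ _ => Nat.factorial_pos _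
  exact sum_pos' (fun _ _ => by positivity) ⟨_, hx, by positivity⟩

open MeasureTheory ProbabilityTheory

section Convolution

variable {E : Type*} {Y₁ Y₂ : E → ℕ}

theorem setOf_add_eq_eq_biUnion (n : ℕ) :
    {ω | Y₁ ω + Y₂ ω = n} = ⋃ ij ∈ antidiagonal n, {ω | Y₁ ω = ij.1} ∩ {ω | Y₂ ω = ij.2} := by
  ext ω
  simp

theorem setOf_add_eq_inter_eq {m n : ℕ} (hmn : m ≤ n) :
    {ω | Y₁ ω + Y₂ ω = n} ∩ {ω | Y₂ ω = m} = {ω | Y₁ ω = n - m} ∩ {ω | Y₂ ω = m} := by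
  ext ω
  simp only [Set.mem_inter_iff, Set.mem_ofPred_eq]
  omega

variable [MeasurableSpace E] {μ : Measure E}

theorem ProbabilityTheory.IndepFun.measure_eq_inter_eq_mul (hindep : IndepFun Y₁ Y₂ μ)
    (i j : ℕ) :
    μ ({ω | Y₁ ω = i} ∩ {ω | Y₂ ω = j}) = μ {ω | Y₁ ω = i} * μ {ω | Y₂ ω = j} :=
  hindep.measure_inter_preimage_eq_mul _ _ (measurableSet_singleton i) (measurableSet_singleton j)

theorem ProbabilityTheory.IndepFun.measure_add_eq_sum_antidiagonal (hY₁ : Measurable Y₁)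
    (hY₂ : Measurable Y₂) (hindep : IndepFun Y₁ Y₂ μ) (n : ℕ) :
    μ {ω | Y₁ ω + Y₂ ω = n} =
      ∑ ij ∈ antidiagonal n, μ {ω | Y₁ ω = ij.1} * μ {ω | Y₂ ω = ij.2} := by
  rw [setOf_add_eq_eq_biUnion, measure_biUnion_finset]
  · exact sum_congr rfl fun ij _ => hindep.measure_eq_inter_eq_mul ij.1 ij.2
  · intro ij _ ij' _ hne
    exact Set.disjoint_left.mpr fun ω h h' =>
      hne (Prod.ext (h.1.symm.trans h'.1) (h.2.symm.trans h'.2))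
  · exact fun ij _ => (hY₁ (measurableSet_singleton _)).inter (hY₂ (measurableSet_singleton _))

theorem cond_add_eq_eq_ofReal_div (hY₁ : Measurable Y₁) (hY₂ : Measurable Y₂)
    (hindep : IndepFun Y₁ Y₂ μ) {p q : ℕ → ℝ} (hp : ∀ j, 0 ≤ p j) (hq : ∀ j, 0 ≤ q j)
    (hpmf₁ : ∀ j, μ {ω | Y₁ ω = j} = ENNReal.ofReal (p j))
    (hpmf₂ : ∀ j, μ {ω | Y₂ ω = j} = ENNReal.ofReal (q j)) {m n : ℕ} (hmn : m ≤ n)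
    (hpos : 0 < ∑ ij ∈ antidiagonal n, p ij.1 * q ij.2) :
    cond μ {ω | Y₁ ω + Y₂ ω = n} {ω | Y₂ ω = m} =
      ENNReal.ofReal (p (n - m) * q m / ∑ ij ∈ antidiagonal n, p ij.1 * q ij.2) := by
  have hmeas : MeasurableSet {ω | Y₁ ω + Y₂ ω = n} := (hY₁.add hY₂) (measurableSet_singleton n)
  rw [cond_apply hmeas, setOf_add_eq_inter_eq hmn, hindep.measure_add_eq_sum_antidiagonal hY₁ hY₂,
    hindep.measure_eq_inter_eq_mul]
  simp only [hpmf₁, hpmf₂, ← ENNReal.ofReal_mul (hp _)]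
  rw [← ENNReal.ofReal_sum_of_nonneg fun ij _ => mul_nonneg (hp ij.1) (hq ij.2),
    ← ENNReal.div_eq_inv_mul, ENNReal.ofReal_div_of_pos hpos]

end Convolution

theorem cond_homogeneous_poisson_field_of_order_k_general
    {E : Type*} [MeasurableSpace E] (μ : Measure E)
    (k : ℕ) (hk : 1 ≤ k) (lam b₁ b₂ : ℝ) (hlam : 0 < lam) (hb₁ : 0 ≤ b₁) (hb₂ : 0 < b₂)
    (Y₁ Y₂ : E → ℕ) (hY₁ : Measurable Y₁) (hY₂ : Measurable Y₂)
    (hindep : IndepFun Y₁ Y₂ μ)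
    (hpmf₁ : ∀ j : ℕ,
      μ {ω | Y₁ ω = j} = ENNReal.ofReal (Real.exp (-(k * lam * b₁)) * ck k j (lam * b₁)))
    (hpmf₂ : ∀ j : ℕ,
      μ {ω | Y₂ ω = j} = ENNReal.ofReal (Real.exp (-(k * lam * b₂)) * ck k j (lam * b₂)))
    (m n : ℕ) (hmn : m ≤ n) :
    ProbabilityTheory.cond μ {ω | Y₁ ω + Y₂ ω = n} {ω | Y₂ ω = m} =
      ENNReal.ofReal
        (ck k (n - m) (lam * b₁) * ck k m (lam * b₂) / ck k n (lam * (b₁ + b₂))) := by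
  set e₁ := Real.exp (-(k * lam * b₁))
  set e₂ := Real.exp (-(k * lam * b₂))
  have hconv : ∑ ij ∈ antidiagonal n, e₁ * ck k ij.1 (lam * b₁) * (e₂ * ck k ij.2 (lam * b₂)) =
      e₁ * e₂ * ck k n (lam * (b₁ + b₂)) := by
    rw [mul_add, ck_add, mul_sum]
    exact sum_congr rfl fun _ _ => by ring
  have hck : 0 < ck k n (lam * (b₁ + b₂)) := ck_pos hk n (by positivity)
  have he₁ : 0 < e₁ := Real.exp_pos _
  have he₂ : 0 < e₂ := Real.exp_pos _
  rw [cond_add_eq_eq_ofReal_div hY₁ hY₂ hindep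
    (fun j => mul_nonneg he₁.le (ck_nonneg k j (by positivity)))
    (fun j => mul_nonneg he₂.le (ck_nonneg k j (by positivity))) hpmf₁ hpmf₂ hmn
    (hconv ▸ by positivity), hconv]
  congr 1
  field_simp

/-- Conditional distribution of the homogeneous Poisson field of order `k` on a subset:
if `Y₁, Y₂` are independent with the order-`k` Poisson pmfs with parameters `kλb₁`, `kλb₂`,
then `P(Y₂ = m | Y₁ + Y₂ = n) = c_k(n−m, λb₁) c_k(m, λb₂) / c_k(n, λ(b₁+b₂))`. -/
theorem cond_homogeneous_poisson_field_of_order_k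
    {E : Type*} [MeasurableSpace E] (μ : Measure E) [IsProbabilityMeasure μ]
    (k : ℕ) (hk : 1 ≤ k) (lam b₁ b₂ : ℝ) (hlam : 0 < lam) (hb₁ : 0 ≤ b₁) (hb₂ : 0 < b₂)
    (Y₁ Y₂ : E → ℕ) (hY₁ : Measurable Y₁) (hY₂ : Measurable Y₂)
    (hindep : IndepFun Y₁ Y₂ μ)
    (hpmf₁ : ∀ j : ℕ,
      μ {ω | Y₁ ω = j} = ENNReal.ofReal (Real.exp (-(k * lam * b₁)) * ck k j (lam * b₁)))
    (hpmf₂ : ∀ j : ℕ,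
      μ {ω | Y₂ ω = j} = ENNReal.ofReal (Real.exp (-(k * lam * b₂)) * ck k j (lam * b₂)))
    (m n : ℕ) (hmn : m ≤ n) :
    ProbabilityTheory.cond μ {ω | Y₁ ω + Y₂ ω = n} {ω | Y₂ ω = m} =
      ENNReal.ofReal
        (ck k (n - m) (lam * b₁) * ck k m (lam * b₂) / ck k n (lam * (b₁ + b₂))) :=
  cond_homogeneous_poisson_field_of_order_k_general μ k hk lam b₁ b₂ hlam hb₁ hb₂ Y₁ Y₂ hY₁ hY₂
    hindep hpmf₁ hpmf₂ m n hmn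
end

section
/- Let k ≥ 1 be an integer and α ∈ (0,1). Then for every real θ, (1 − (1/k)∑_{j=1}^k e^{iθj})^α = ∑_{y=0}^∞ e^{iθy} · ∑_{x ∈ Ω(k,y)} (−1)^{ζ(x)} (∏_{l=0}^{ζ(x)−1}(α − l)) / (Π!(x) · k^{ζ(x)}), where the left-hand side is the principal complex power. Consequently, the characteristic exponent of the space-fractional Poisson process of order k corresponds to the Lévy measure ν(dx) = k^α λ^α ∑_{y=1}^∞ (−1)^{y+1} ∑_{x ∈ Ω(k,y)} (∏_{l=0}^{ζ(x)−1}(α−l)) (−1)^{ζ(x)−y−1} / (Π!(x) k^{ζ(x)}) δ_y(dx) as asserted in the Lévy–Khintchine representation. -/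
/-!
Write the base as `1 + Z` with `Z = -(1/k) ∑_{j=1}^k e^{iθj}`, so `‖Z‖ ≤ 1`. For `0 < α ≤ 1` the
binomial series `∑ binom(α, n) wⁿ` converges absolutely on the closed unit disc (the numbers
`|binom(α, n + 1)|` telescope), so it equals `(1 + w)^α` there by continuity from the open disc.
Expanding each `Zⁿ` by the multinomial theorem gives an absolutely summable family indexed by
`x ∈ ℕᵏ`, and regrouping it along `y = ∑ j xⱼ` instead of `n = ∑ xⱼ` gives the series in `e^{iθy}`.
-/

open scoped BigOperators

open Finset Nat

section BinomialCoefficients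

variable {K : Type*} [Field K] [CharZero K]

theorem Ring.choose_eq_prod_range_div (a : K) (n : ℕ) :
    Ring.choose a n = (∏ l ∈ range n, (a - l)) / n ! := by
  rw [Ring.choose_eq_smul, ← descPochhammer_eval_eq_prod_range, smul_eq_mul, inv_mul_eq_div,
    ← Polynomial.aeval_eq_smeval, ← descPochhammer_map (algebraMap ℤ K),
    Polynomial.eval_map_algebraMap]

theorem Ring.succ_mul_choose_succ (a : K) (n : ℕ) :
    (n + 1) * Ring.choose a (n + 1) = Ring.choose a n * (a - n) := by
  simpa [Nat.choose_succ_self_right, Ring.choose_one_right] using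
    Ring.choose_smul_choose a (Nat.le_succ n)

lemma neg_one_pow_mul_choose_sub_one_succ (a : K) (n : ℕ) :
    (-1) ^ (n + 1) * Ring.choose (a - 1) (n + 1) =
      (-1) ^ n * Ring.choose (a - 1) n * (1 - a / (n + 1)) := by
  have h := Ring.succ_mul_choose_succ (a - 1) n
  have hn : (n + 1 : K) ≠ 0 := by exact_mod_cast n.succ_ne_zero
  field_simp
  linear_combination (-(-1) ^ n) * h

variable {α : ℝ}

lemma neg_one_pow_mul_choose_sub_one_nonneg (hα : α ≤ 1) (n : ℕ) :
    0 ≤ (-1) ^ n * Ring.choose (α - 1) n := by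
  induction n with
  | zero => simp
  | succ n ih =>
    rw [neg_one_pow_mul_choose_sub_one_succ]
    refine mul_nonneg ih (sub_nonneg.2 ((div_le_one (by positivity)).2 ?_))
    linarith [(n.cast_nonneg : (0 : ℝ) ≤ n)]

/-- By Pascal's rule `binom(α, n + 1) = binom(α - 1, n) + binom(α - 1, n + 1)`, and for `0 ≤ α ≤ 1`
the numbers `(-1)ⁿ binom(α - 1, n)` decrease from `1` to `0`. -/
lemma abs_choose_succ (h0 : 0 ≤ α) (h1 : α ≤ 1) (n : ℕ) :
    |Ring.choose α (n + 1)| =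
      (-1) ^ n * Ring.choose (α - 1) n - (-1) ^ (n + 1) * Ring.choose (α - 1) (n + 1) := by
  have hpascal := Ring.choose_succ_succ (α - 1) n
  rw [sub_add_cancel] at hpascal
  have hdiff : (-1) ^ n * Ring.choose α (n + 1) =
      (-1) ^ n * Ring.choose (α - 1) n - (-1) ^ (n + 1) * Ring.choose (α - 1) (n + 1) := by
    rw [hpascal]; ring
  have hdecr :
      (-1) ^ (n + 1) * Ring.choose (α - 1) (n + 1) ≤ (-1) ^ n * Ring.choose (α - 1) n := by
    rw [neg_one_pow_mul_choose_sub_one_succ]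
    exact mul_le_of_le_one_right (neg_one_pow_mul_choose_sub_one_nonneg h1 n)
      (sub_le_self _ (by positivity))
  have hnonneg : 0 ≤ (-1) ^ n * Ring.choose α (n + 1) := hdiff ▸ sub_nonneg.2 hdecr
  rw [← hdiff, ← abs_of_nonneg hnonneg, abs_mul, abs_neg_one_pow, one_mul]

lemma summable_abs_choose (h0 : 0 ≤ α) (h1 : α ≤ 1) :
    Summable fun n ↦ |Ring.choose α n| := by
  rw [← summable_nat_add_iff 1]
  refine summable_of_sum_range_le (c := 1) (fun n ↦ abs_nonneg _) fun N ↦ ?_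
  simp_rw [abs_choose_succ h0 h1, sum_range_sub']
  simpa using neg_one_pow_mul_choose_sub_one_nonneg h1 N

end BinomialCoefficients

section BinomialSeries

open Metric

lemma continuousOn_one_add_cpow {a : ℂ} (ha : 0 < a.re) :
    ContinuousOn (fun z : ℂ ↦ (1 + z) ^ a) (closedBall 0 1) := by
  intro z hz
  have hre : 0 ≤ (1 + z).re := by
    have := (abs_le.1 ((Complex.abs_re_le_norm z).trans (mem_closedBall_zero_iff.1 hz))).1
    simp only [Complex.add_re, Complex.one_re]
    linarith
  exact ((Complex.continuousAt_cpow_const_of_re_pos (Or.inl hre) ha).comp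
    (continuous_const.add continuous_id).continuousAt).continuousWithinAt

lemma tsum_choose_mul_pow (a : ℂ) {z : ℂ} (hz : ‖z‖ < 1) :
    ∑' n, Ring.choose a n * z ^ n = (1 + z) ^ a := by
  have := Complex.one_add_cpow_hasFPowerSeriesOnBall_zero (a := a).hasSum (y := z)
    (by simpa [← ofReal_norm] using hz)
  simpa [binomialSeries, FormalMultilinearSeries.ofScalars] using this.tsum_eq

lemma norm_choose_mul_pow_le (α : ℝ) (n : ℕ) {z : ℂ} (hz : ‖z‖ ≤ 1) :
    ‖Ring.choose (α : ℂ) n * z ^ n‖ ≤ |Ring.choose α n| := by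
  rw [norm_mul, norm_pow, ← Complex.ofReal_choose, Complex.norm_real, Real.norm_eq_abs]
  exact mul_le_of_le_one_right (abs_nonneg _) (pow_le_one₀ (norm_nonneg z) hz)

theorem hasSum_choose_mul_pow {α : ℝ} (h0 : 0 < α) (h1 : α ≤ 1) {w : ℂ} (hw : ‖w‖ ≤ 1) :
    HasSum (fun n ↦ Ring.choose (α : ℂ) n * w ^ n) ((1 + w) ^ (α : ℂ)) := by
  have hsum := summable_abs_choose h0.le h1
  have hcont : ContinuousOn (fun z : ℂ ↦ ∑' n, Ring.choose (α : ℂ) n * z ^ n) (closedBall 0 1) :=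
    continuousOn_tsum (fun n ↦ by fun_prop) hsum
      fun n z hz ↦ norm_choose_mul_pow_le α n (mem_closedBall_zero_iff.1 hz)
  have heq : Set.EqOn (fun z : ℂ ↦ ∑' n, Ring.choose (α : ℂ) n * z ^ n)
      (fun z ↦ (1 + z) ^ (α : ℂ)) (closedBall 0 1) :=
    Set.EqOn.of_subset_closure (fun z hz ↦ tsum_choose_mul_pow _ (mem_ball_zero_iff.1 hz)) hcont
      (continuousOn_one_add_cpow (by simpa using h0)) ball_subset_closedBall
      (closure_ball (0 : ℂ) one_ne_zero).ge
  have hw' := heq (mem_closedBall_zero_iff.2 hw)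
  dsimp only at hw'
  rw [← hw']
  exact (Summable.of_norm_bounded hsum fun n ↦ norm_choose_mul_pow_le α n hw).hasSum

end BinomialSeries

section Regrouping

variable {β γ : Type*}

lemma tsum_preimage_singleton_eq_sum {M : Type*} [AddCommMonoid M] [TopologicalSpace M]
    {g : β → γ} {s : γ → Finset β} (hs : ∀ c b, b ∈ s c ↔ g b = c) (f : β → M) (c : γ) :
    ∑' b : g ⁻¹' {c}, f b = ∑ b ∈ s c, f b := by
  rw [tsum_congr_set_coe f (t := ↑(s c)) (by ext b; simp [hs])]
  exact Finset.tsum_subtype (s c) f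

lemma HasSum.sum_fiberwise {G : Type*} [AddCommGroup G] [UniformSpace G] [IsUniformAddGroup G]
    [CompleteSpace G] [T2Space G] {f : β → G} {a : G} (hf : HasSum f a) {g : β → γ}
    {s : γ → Finset β} (hs : ∀ c b, b ∈ s c ↔ g b = c) :
    HasSum (fun c ↦ ∑ b ∈ s c, f b) a := by
  convert hf.tsum_fiberwise g using 1
  exact (funext (tsum_preimage_singleton_eq_sum hs f)).symm

end Regrouping

section Multinomial

variable {ι 𝕜 : Type*} [Fintype ι] [DecidableEq ι] [RCLike 𝕜] {c : ℕ → 𝕜} {z : ι → 𝕜}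

lemma mem_piAntidiag_univ {x : ι → ℕ} {n : ℕ} : x ∈ piAntidiag univ n ↔ ∑ i, x i = n := by
  simp

lemma sum_piAntidiag_multinomial_mul_prod_pow {R : Type*} [CommSemiring R] (f : ℕ → R)
    (w : ι → R) (n : ℕ) :
    ∑ x ∈ piAntidiag univ n, f (∑ i, x i) * multinomial univ x * ∏ i, w i ^ x i =
      f n * (∑ i, w i) ^ n := by
  rw [sum_pow_eq_sum_piAntidiag, mul_sum]
  refine sum_congr rfl fun x hx ↦ ?_
  rw [mem_piAntidiag_univ.1 hx, mul_assoc]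

lemma summable_mul_multinomial_mul_prod_pow (hc : Summable fun n ↦ ‖c n‖) (hz : ∑ i, ‖z i‖ ≤ 1) :
    Summable fun x : ι → ℕ ↦ c (∑ i, x i) * multinomial univ x * ∏ i, z i ^ x i := by
  refine Summable.of_norm ?_
  have hnorm : ∀ x : ι → ℕ, ‖c (∑ i, x i) * multinomial univ x * ∏ i, z i ^ x i‖ =
      ‖c (∑ i, x i)‖ * multinomial univ x * ∏ i, ‖z i‖ ^ x i := fun x ↦ by
    simp only [norm_mul, norm_prod, norm_pow, RCLike.norm_natCast]
  simp_rw [hnorm]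
  set N : (ι → ℕ) → ℝ := fun x ↦ ‖c (∑ i, x i)‖ * multinomial univ x * ∏ i, ‖z i‖ ^ x i
  have hN : ∀ x, 0 ≤ N x := fun x ↦ by positivity
  rw [← (Equiv.sigmaFiberEquiv fun x : ι → ℕ ↦ ∑ i, x i).summable_iff,
    summable_sigma_of_nonneg (f := N ∘ Equiv.sigmaFiberEquiv _) fun _ ↦ hN _]
  refine ⟨fun n ↦ ?_, ?_⟩
  · have : ({x | ∑ i, x i = n} : Set (ι → ℕ)).Finite :=
      (piAntidiag univ n).finite_toSet.subset fun x hx ↦ mem_piAntidiag_univ.2 hx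
    exact this.summable N
  · refine hc.of_nonneg_of_le (fun _ ↦ tsum_nonneg fun _ ↦ hN _) fun n ↦ ?_
    have := tsum_preimage_singleton_eq_sum (g := fun x : ι → ℕ ↦ ∑ i, x i)
      (s := fun n ↦ piAntidiag univ n) (fun n x ↦ mem_piAntidiag_univ) N n
    change ∑' x : (fun x : ι → ℕ ↦ ∑ i, x i) ⁻¹' {n}, N x ≤ _
    rw [this]
    refine (sum_piAntidiag_multinomial_mul_prod_pow (fun m ↦ ‖c m‖) (fun i ↦ ‖z i‖) n).trans_le ?_
    exact mul_le_of_le_one_right (norm_nonneg _) (pow_le_one₀ (by positivity) hz)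

theorem hasSum_mul_multinomial_mul_prod_pow (hc : Summable fun n ↦ ‖c n‖) (hz : ∑ i, ‖z i‖ ≤ 1) :
    HasSum (fun x : ι → ℕ ↦ c (∑ i, x i) * multinomial univ x * ∏ i, z i ^ x i)
      (∑' n, c n * (∑ i, z i) ^ n) := by
  have hsum := summable_mul_multinomial_mul_prod_pow hc hz
  have h := hsum.hasSum.sum_fiberwise (g := fun x : ι → ℕ ↦ ∑ i, x i)
    (s := fun n ↦ piAntidiag univ n) fun n x ↦ mem_piAntidiag_univ
  simp only [sum_piAntidiag_multinomial_mul_prod_pow] at h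
  rw [h.tsum_eq]
  exact hsum.hasSum

end Multinomial

lemma mem_Omega_s8 {k y : ℕ} {x : Fin k → ℕ} : x ∈ Omega k y ↔ ∑ i, (i.1 + 1) * x i = y := by
  refine ⟨fun hx ↦ (mem_filter.1 hx).2, fun hx ↦ mem_filter.2 ⟨?_, hx⟩⟩
  refine Fintype.mem_piFinset.2 fun i ↦ mem_range_succ_iff.2 ?_
  calc x i ≤ (i.1 + 1) * x i := Nat.le_mul_of_pos_left _ i.1.succ_pos
    _ ≤ ∑ j, (j.1 + 1) * x j := single_le_sum (f := fun j : Fin k ↦ (j.1 + 1) * x j)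
        (fun _ _ ↦ Nat.zero_le _) (mem_univ i)
    _ = y := hx

lemma choose_mul_multinomial {ι K : Type*} [Fintype ι] [DecidableEq ι] [Field K] [CharZero K]
    (a : K) (x : ι → ℕ) :
    Ring.choose a (∑ i, x i) * multinomial univ x =
      (∏ l ∈ range (∑ i, x i), (a - l)) / ∏ i, ((x i)! : K) := by
  have hspec : (∏ i, ((x i)! : K)) * multinomial univ x = (∑ i, x i)! := by
    exact_mod_cast multinomial_spec univ x
  rw [Ring.choose_eq_prod_range_div, ← hspec, div_mul_eq_mul_div,
    mul_div_mul_right _ _ (Nat.cast_ne_zero.2 (multinomial_pos univ x).ne')]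

lemma prod_neg_exp_div_pow (θ : ℝ) (k : ℕ) (x : Fin k → ℕ) :
    ∏ i, (-(Complex.exp (Complex.I * θ * (i.1 + 1)) / k)) ^ x i =
      Complex.exp (Complex.I * θ * (∑ i, (i.1 + 1) * x i : ℕ)) *
        ((-1) ^ zeta x / (k : ℂ) ^ zeta x) := by
  have hfactor : ∀ i : Fin k, (-(Complex.exp (Complex.I * θ * (i.1 + 1)) / k)) ^ x i =
      Complex.exp (((i.1 + 1) * x i : ℕ) * (Complex.I * θ)) * ((-1) ^ x i / (k : ℂ) ^ x i) := by
    intro i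
    rw [neg_pow, div_pow, ← Complex.exp_nat_mul]
    push_cast
    ring_nf
  rw [prod_congr rfl fun i _ ↦ hfactor i, prod_mul_distrib, ← Complex.exp_sum, prod_div_distrib,
    prod_pow_eq_pow_sum, prod_pow_eq_pow_sum, zeta]
  push_cast
  congr 2
  rw [mul_sum]
  exact sum_congr rfl fun i _ ↦ by ring

lemma norm_neg_exp_div (θ : ℝ) (n k : ℕ) :
    ‖-(Complex.exp (Complex.I * θ * (n + 1)) / k)‖ = (k : ℝ)⁻¹ := by
  rw [norm_neg, norm_div,
    show Complex.I * θ * (n + 1) = ((θ * (n + 1) : ℝ) : ℂ) * Complex.I by push_cast; ring,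
    Complex.norm_exp_ofReal_mul_I, Complex.norm_natCast, one_div]

lemma choose_mul_multinomial_mul_prod_neg_exp_div_pow (α θ : ℝ) (k : ℕ) (x : Fin k → ℕ) :
    Ring.choose (α : ℂ) (∑ i, x i) * multinomial univ x *
        ∏ i, (-(Complex.exp (Complex.I * θ * (i.1 + 1)) / k)) ^ x i =
      Complex.exp (Complex.I * θ * (∑ i, (i.1 + 1) * x i : ℕ)) *
        (((-1 : ℝ) ^ zeta x * (∏ l ∈ range (zeta x), (α - l)) /
          ((pifact x : ℝ) * (k : ℝ) ^ zeta x) : ℝ) : ℂ) := by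
  rw [prod_neg_exp_div_pow, choose_mul_multinomial]
  simp only [zeta, pifact]
  push_cast
  ring

theorem levy_exponent_expansion_space_fractional_poisson_of_order_k_general
    (k : ℕ) (α : ℝ) (hα : α ∈ Set.Ioo (0 : ℝ) 1) (θ : ℝ) :
    (1 - (1 / (k : ℂ)) * ∑ j ∈ Finset.range k, Complex.exp (Complex.I * θ * (j + 1)))
        ^ (α : ℂ) =
      ∑' y : ℕ, Complex.exp (Complex.I * θ * y) *
        ((∑ x ∈ Omega k y,
          (-1 : ℝ) ^ zeta x * (∏ l ∈ Finset.range (zeta x), (α - l)) /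
            ((pifact x : ℝ) * (k : ℝ) ^ zeta x) : ℝ) : ℂ) := by
  set z : Fin k → ℂ := fun i ↦ -(Complex.exp (Complex.I * θ * (i.1 + 1)) / k)
  have hz : ∑ i, ‖z i‖ ≤ 1 := by
    simp only [z, norm_neg_exp_div]
    simpa using (mul_inv_le_one : (k : ℝ) * (k : ℝ)⁻¹ ≤ 1)
  have hbase : 1 - (1 / (k : ℂ)) * ∑ j ∈ range k, Complex.exp (Complex.I * θ * (j + 1)) =
      1 + ∑ i, z i := by
    rw [← Fin.sum_univ_eq_sum_range (fun j ↦ Complex.exp (Complex.I * θ * (j + 1))), mul_sum,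
      sub_eq_add_neg, ← sum_neg_distrib]
    simp only [z, div_eq_inv_mul, mul_one]
  have hchoose : Summable fun n ↦ ‖Ring.choose (α : ℂ) n‖ := by
    simpa only [← Complex.ofReal_choose, Complex.norm_real, Real.norm_eq_abs] using
      summable_abs_choose hα.1.le hα.2.le
  have hregroup :=
    (hasSum_mul_multinomial_mul_prod_pow hchoose hz).sum_fiberwise fun y x ↦ mem_Omega_s8
  rw [hbase, ← (hasSum_choose_mul_pow hα.1 hα.2.le
    ((norm_sum_le _ _).trans hz)).tsum_eq, ← hregroup.tsum_eq]
  refine tsum_congr fun y ↦ ?_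
  rw [Complex.ofReal_sum, mul_sum]
  refine sum_congr rfl fun x hx ↦ ?_
  rw [choose_mul_multinomial_mul_prod_neg_exp_div_pow, mem_Omega_s8.1 hx]

/-- The fractional-binomial expansion underlying the Lévy–Khintchine representation of the
space-fractional Poisson process of order `k`: for every real `θ`,
`(1 − (1/k)∑_{j=1}^k e^{iθj})^α = ∑_{y=0}^∞ e^{iθy} ∑_{x ∈ Ω(k,y)}
(−1)^{ζ(x)} (∏_{l<ζ(x)} (α − l)) / (Π!(x) k^{ζ(x)})`, with principal complex power. -/
theorem levy_exponent_expansion_space_fractional_poisson_of_order_k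
    (k : ℕ) (hk : 1 ≤ k) (α : ℝ) (hα : α ∈ Set.Ioo (0 : ℝ) 1) (θ : ℝ) :
    (1 - (1 / (k : ℂ)) * ∑ j ∈ Finset.range k, Complex.exp (Complex.I * θ * (j + 1)))
        ^ (α : ℂ) =
      ∑' y : ℕ, Complex.exp (Complex.I * θ * y) *
        ((∑ x ∈ Omega k y,
          (-1 : ℝ) ^ zeta x * (∏ l ∈ Finset.range (zeta x), (α - l)) /
            ((pifact x : ℝ) * (k : ℝ) ^ zeta x) : ℝ) : ℂ) :=
  levy_exponent_expansion_space_fractional_poisson_of_order_k_general k α hα θ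
end
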